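/- arXiv:2109.01285 — 2 statements merged into one kernel-verified Lean document; each statement's English description precedes it below -/
import Mathlib

section
/- Skein-relation identity: let f_k: V → k and g_k: k → V be linear maps with f_k ∘ g_k = id_k, and let M_k be an endomorphism of V with ker f_k ⊆ ker(id_V − M_k). Then for every linear map f_s: V → k, every linear map g_t: k → V, and all endomorphisms A, A′, M_t of V, the scalar identity f_s(A((id_V − M_k)(A′((id_V − M_t)(g_t(1)))))) = f_s(A((id_V − M_k)(g_k(1)))) · f_k(A′((id_V − M_t)(g_t(1)))) holds. -/
/-- Skein-relation identity: if `f_k : V → k`, `g_k : k → V` satisfy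
`f_k ∘ g_k = id` and `M_k` is an endomorphism with `ker f_k ⊆ ker (id - M_k)`,
then for every `f_s : V → k`, `g_t : k → V` and endomorphisms `A, A', M_t`,
`f_s (A ((id - M_k) (A' ((id - M_t) (g_t 1))))) =
  f_s (A ((id - M_k) (g_k 1))) * f_k (A' ((id - M_t) (g_t 1)))`. -/
theorem stmt7 {k V : Type*} [Field k] [AddCommGroup V] [Module k V]
    (fk : V →ₗ[k] k) (gk : k →ₗ[k] V) (hfgk : fk ∘ₗ gk = LinearMap.id)
    (Mk : V →ₗ[k] V)
    (hMk : LinearMap.ker fk ≤ LinearMap.ker ((LinearMap.id : V →ₗ[k] V) - Mk)) :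
    ∀ (fs : V →ₗ[k] k) (gt : k →ₗ[k] V) (A A' Mt : V →ₗ[k] V),
      fs (A (((LinearMap.id : V →ₗ[k] V) - Mk)
          (A' (((LinearMap.id : V →ₗ[k] V) - Mt) (gt 1))))) =
        fs (A (((LinearMap.id : V →ₗ[k] V) - Mk) (gk 1))) *
          fk (A' (((LinearMap.id : V →ₗ[k] V) - Mt) (gt 1))) := by
  intro fs gt A A' Mt
  set v := A' (((LinearMap.id : V →ₗ[k] V) - Mt) (gt 1)) with hv
  have hgk1 : fk (gk 1) = 1 := by
    have := congrArg (fun f => f (1 : k)) hfgk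
    simpa using this
  have hker : v - fk v • gk 1 ∈ LinearMap.ker fk := by
    simp [LinearMap.mem_ker, hgk1]
  have h0 : ((LinearMap.id : V →ₗ[k] V) - Mk) (v - fk v • gk 1) = 0 := hMk hker
  have h1 : ((LinearMap.id : V →ₗ[k] V) - Mk) v
      = fk v • ((LinearMap.id : V →ₗ[k] V) - Mk) (gk 1) := by
    have := sub_eq_zero.mp (by simpa [map_sub, map_smul] using h0)
    simpa [map_smul] using this
  rw [h1]
  simp [mul_comm]
end

section
/- Meridian-relation identity: let f_s: V → k and g_s: k → V be linear maps with f_s ∘ g_s = id_k, and let M_s be an endomorphism of V with ker f_s ⊆ ker(id_V − M_s). Then for every linear map g_t: k → V and all endomorphisms A, M_t of V, the scalar identity f_s(M_s(A((id_V − M_t)(g_t(1))))) = (1 − f_s((id_V − M_s)(g_s(1)))) · f_s(A((id_V − M_t)(g_t(1)))) holds. -/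
/-- Meridian-relation identity: if `f_s : V → k`, `g_s : k → V` satisfy
`f_s ∘ g_s = id` and `M_s` is an endomorphism with `ker f_s ⊆ ker (id - M_s)`,
then for every `g_t : k → V` and endomorphisms `A, M_t`,
`f_s (M_s (A ((id - M_t) (g_t 1)))) =
  (1 - f_s ((id - M_s) (g_s 1))) * f_s (A ((id - M_t) (g_t 1)))`. -/
theorem stmt8 {k V : Type*} [Field k] [AddCommGroup V] [Module k V]
    (fs : V →ₗ[k] k) (gs : k →ₗ[k] V) (hfgs : fs ∘ₗ gs = LinearMap.id)
    (Ms : V →ₗ[k] V)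
    (hMs : LinearMap.ker fs ≤ LinearMap.ker ((LinearMap.id : V →ₗ[k] V) - Ms)) :
    ∀ (gt : k →ₗ[k] V) (A Mt : V →ₗ[k] V),
      fs (Ms (A (((LinearMap.id : V →ₗ[k] V) - Mt) (gt 1)))) =
        (1 - fs (((LinearMap.id : V →ₗ[k] V) - Ms) (gs 1))) *
          fs (A (((LinearMap.id : V →ₗ[k] V) - Mt) (gt 1))) := by
  intro gt A Mt
  set v := A (((LinearMap.id : V →ₗ[k] V) - Mt) (gt 1)) with hv
  have hker : v - gs (fs v) ∈ LinearMap.ker fs := by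
    simp [LinearMap.mem_ker, map_sub]
    have := congrArg (fun h : k →ₗ[k] k => h (fs v)) hfgs
    exact sub_eq_zero.mpr (by simpa using this.symm)
  have h0 := hMs hker
  rw [LinearMap.mem_ker] at h0
  have h1 : v - Ms v = fs v • (gs 1 - Ms (gs 1)) := by
    have h2 : (v - gs (fs v)) - Ms (v - gs (fs v)) = 0 := by simpa using h0
    have h3 : gs (fs v) = fs v • gs 1 := by
      rw [← map_smul, smul_eq_mul, mul_one]
    have : v - Ms v = gs (fs v) - Ms (gs (fs v)) := by
      have := sub_eq_zero.mp h2
      rw [map_sub] at this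
      linear_combination (norm := abel) this
    rw [this, h3, map_smul, smul_sub]
  have h4 : fs v - fs (Ms v) = fs v * (fs (gs 1) - fs (Ms (gs 1))) := by
    have := congrArg fs h1
    simpa [map_sub, smul_eq_mul] using this
  have hg1 : fs (gs 1) = 1 := by
    have := congrArg (fun h : k →ₗ[k] k => h 1) hfgs
    simpa using this
  simp only [LinearMap.sub_apply, LinearMap.id_apply, map_sub]
  rw [hg1] at h4 ⊢
  linear_combination -h4
end
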